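/- arXiv:1406.5519 — 4 statements merged into one kernel-verified Lean document; each statement's English description precedes it below -/
import Mathlib

section
/- Let U ⊆ ℝ^n be open, and let ψ, χ : U → ℝ^{n+2} and τ : U → ℝ be differentiable at x ∈ U, with ⟨ψ(y), ψ(y)⟩ = 1, ⟨χ(y), χ(y)⟩ = 1 and ⟨ψ(y), χ(y)⟩ = 0 for all y ∈ U (Euclidean inner product). Let θ : ℝ → ℝ be differentiable. Define φ := cos(θ∘τ)·ψ − sin(θ∘τ)·χ and ν := sin(θ∘τ)·ψ + cos(θ∘τ)·χ. Then for every v ∈ ℝ^n, ⟨dφ_x(v), ν(x)⟩ = −θ'(τ(x))·dτ_x(v) + ⟨dψ_x(v), χ(x)⟩. -/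
open scoped RealInnerProductSpace
open Filter Topology

/-!
Differentiating `φ = cos f • ψ - sin f • χ` with `f = θ ∘ τ` gives
`dφ = cos f • dψ - sin f • dχ - df • ν`. Since `ψ, χ` stay orthonormal, `⟨dψ, ψ⟩ = ⟨dχ, χ⟩ = 0`
and `⟨dχ, ψ⟩ = -⟨dψ, χ⟩`, so pairing with the unit vector `ν` leaves
`(cos² f + sin² f) ⟨dψ, χ⟩ - df`.
-/

section

variable {E F : Type*} [NormedAddCommGroup E] [NormedSpace ℝ E]
  [NormedAddCommGroup F] [InnerProductSpace ℝ F]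

theorem HasFDerivAt.inner_add_inner_eq_zero_of_eventually_const {f g : E → F}
    {f' g' : E →L[ℝ] F} {x : E} {c : ℝ} (hf : HasFDerivAt f f' x) (hg : HasFDerivAt g g' x)
    (hc : ∀ᶠ y in 𝓝 x, ⟪f y, g y⟫ = c) (v : E) :
    ⟪f' v, g x⟫ + ⟪g' v, f x⟫ = 0 := by
  have hzero := (hf.inner ℝ hg).unique ((hasFDerivAt_const c x).congr_of_eventuallyEq hc)
  have := congrArg (fun L : E →L[ℝ] ℝ => L v) hzero
  simpa [fderivInnerCLM_apply, add_comm, real_inner_comm (f x)] using this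

theorem HasFDerivAt.inner_self_eq_zero_of_eventually_const {f : E → F} {f' : E →L[ℝ] F}
    {x : E} {c : ℝ} (hf : HasFDerivAt f f' x) (hc : ∀ᶠ y in 𝓝 x, ⟪f y, f y⟫ = c) (v : E) :
    ⟪f' v, f x⟫ = 0 := by
  linarith [hf.inner_add_inner_eq_zero_of_eventually_const hf hc v]

theorem HasFDerivAt.cos_smul_sub_sin_smul {f : E → ℝ} {ψ χ : E → F} {f' : E →L[ℝ] ℝ} {ψ' χ' : E →L[ℝ] F}
    {x : E} (hf : HasFDerivAt f f' x) (hψ : HasFDerivAt ψ ψ' x) (hχ : HasFDerivAt χ χ' x) :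
    HasFDerivAt (fun y => Real.cos (f y) • ψ y - Real.sin (f y) • χ y)
      (Real.cos (f x) • ψ' - Real.sin (f x) • χ'
        - f'.smulRight (Real.sin (f x) • ψ x + Real.cos (f x) • χ x)) x := by
  refine ((hf.cos.smul hψ).sub (hf.sin.smul hχ)).congr_fderiv ?_
  ext v
  simp only [sub_apply, add_apply, smul_apply, ContinuousLinearMap.smulRight_apply]
  module

theorem real_inner_cos_smul_sub_sin_smul {a b p q : F} (t : ℝ) (hap : ⟪a, p⟫ = 0) (hbq : ⟪b, q⟫ = 0)
    (hbp : ⟪b, p⟫ = -⟪a, q⟫) :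
    ⟪Real.cos t • a - Real.sin t • b, Real.sin t • p + Real.cos t • q⟫ = ⟪a, q⟫ := by
  simp only [inner_sub_left, inner_add_right, real_inner_smul_left, real_inner_smul_right,
    hap, hbq, hbp]
  linear_combination ⟪a, q⟫ * Real.cos_sq_add_sin_sq t

theorem real_inner_sin_smul_add_cos_smul_self {p q : F} (t : ℝ) (hp : ⟪p, p⟫ = 1) (hq : ⟪q, q⟫ = 1)
    (hpq : ⟪p, q⟫ = 0) :
    ⟪Real.sin t • p + Real.cos t • q, Real.sin t • p + Real.cos t • q⟫ = 1 := by
  simp only [inner_add_left, inner_add_right, real_inner_smul_left, real_inner_smul_right,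
    hp, hq, hpq, real_inner_comm p q]
  linear_combination Real.sin_sq_add_cos_sq t

end

/-- Key computation of Section 2 in the spherical case: for
`φ = cos(θ∘τ)·ψ − sin(θ∘τ)·χ` and `ν = sin(θ∘τ)·ψ + cos(θ∘τ)·χ`, one has
`⟨dφ_x(v), ν(x)⟩ = −θ'(τ(x))·dτ_x(v) + ⟨dψ_x(v), χ(x)⟩`. -/
theorem stmt4 {n : ℕ} (U : Set (EuclideanSpace ℝ (Fin n))) (hU : IsOpen U)
    (x : EuclideanSpace ℝ (Fin n)) (hx : x ∈ U)
    (ψ χ : EuclideanSpace ℝ (Fin n) → EuclideanSpace ℝ (Fin (n + 2)))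
    (τ : EuclideanSpace ℝ (Fin n) → ℝ)
    (hψ : DifferentiableAt ℝ ψ x) (hχ : DifferentiableAt ℝ χ x)
    (hτ : DifferentiableAt ℝ τ x)
    (hψψ : ∀ y ∈ U, ⟪ψ y, ψ y⟫ = 1)
    (hχχ : ∀ y ∈ U, ⟪χ y, χ y⟫ = 1)
    (hψχ : ∀ y ∈ U, ⟪ψ y, χ y⟫ = 0)
    (θ : ℝ → ℝ) (hθ : Differentiable ℝ θ)
    (φ ν : EuclideanSpace ℝ (Fin n) → EuclideanSpace ℝ (Fin (n + 2)))
    (hφ : ∀ y, φ y = Real.cos (θ (τ y)) • ψ y - Real.sin (θ (τ y)) • χ y)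
    (hν : ∀ y, ν y = Real.sin (θ (τ y)) • ψ y + Real.cos (θ (τ y)) • χ y) :
    ∀ v, ⟪fderiv ℝ φ x v, ν x⟫ =
      - deriv θ (τ x) * fderiv ℝ τ x v + ⟪fderiv ℝ ψ x v, χ x⟫ := by
  intro v
  have hUx : U ∈ 𝓝 x := hU.mem_nhds hx
  have hψ' := hψ.hasFDerivAt
  have hχ' := hχ.hasFDerivAt
  have hθτ : HasFDerivAt (fun y => θ (τ y)) (deriv θ (τ x) • fderiv ℝ τ x) x :=
    (hθ (τ x)).hasDerivAt.comp_hasFDerivAt x hτ.hasFDerivAt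
  rw [funext hφ, (hθτ.cos_smul_sub_sin_smul hψ' hχ').fderiv, ← hν x]
  have hψ'ψ := hψ'.inner_self_eq_zero_of_eventually_const (eventually_of_mem hUx hψψ) v
  have hχ'χ := hχ'.inner_self_eq_zero_of_eventually_const (eventually_of_mem hUx hχχ) v
  have hχ'ψ : ⟪fderiv ℝ χ x v, ψ x⟫ = -⟪fderiv ℝ ψ x v, χ x⟫ := by
    linarith [hψ'.inner_add_inner_eq_zero_of_eventually_const hχ' (eventually_of_mem hUx hψχ) v]
  have hνν : ⟪ν x, ν x⟫ = 1 := by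
    rw [hν x]; exact real_inner_sin_smul_add_cos_smul_self _ (hψψ x hx) (hχχ x hx) (hψχ x hx)
  calc ⟪(Real.cos (θ (τ x)) • fderiv ℝ ψ x v - Real.sin (θ (τ x)) • fderiv ℝ χ x v)
          - (deriv θ (τ x) * fderiv ℝ τ x v) • ν x, ν x⟫
      = ⟪Real.cos (θ (τ x)) • fderiv ℝ ψ x v - Real.sin (θ (τ x)) • fderiv ℝ χ x v, ν x⟫
          - deriv θ (τ x) * fderiv ℝ τ x v := by
        rw [inner_sub_left, real_inner_smul_left, hνν, mul_one]
    _ = - deriv θ (τ x) * fderiv ℝ τ x v + ⟪fderiv ℝ ψ x v, χ x⟫ := by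
        rw [hν x, real_inner_cos_smul_sub_sin_smul _ hψ'ψ hχ'χ hχ'ψ]
        ring
end

section
/- Let U ⊆ ℝ^n be open, w : ℝ → ℝ a positive function, and let ψ, χ : U → ℝ^{n+2} and τ : U → ℝ be differentiable at x ∈ U, with ⟨ψ(y), ψ(y)⟩ = 1, ⟨χ(y), χ(y)⟩ = 1 and ⟨ψ(y), χ(y)⟩ = 0 for all y ∈ U (Euclidean inner product). Let θ : ℝ → ℝ be differentiable with θ'(t) = 1/w(t) for all t, and suppose ⟨dψ_x(v), χ(x)⟩ = dτ_x(v)/w(τ(x)) for all v ∈ ℝ^n. Define φ := cos(θ∘τ)·ψ − sin(θ∘τ)·χ and ν := sin(θ∘τ)·ψ + cos(θ∘τ)·χ. Then ⟨dφ_x(v), ν(x)⟩ = 0 for all v ∈ ℝ^n. -/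
/-!
`(φ, ν)` is the orthonormal frame `(ψ, χ)` rotated by the angle `θ ∘ τ`. Rotating an orthonormal
frame by an angle `a` lowers its connection form `⟨dψ, χ⟩` by `da`, and the normalization
`θ' = 1/w` makes `d(θ ∘ τ) = dτ / w(τ)`, which is exactly `⟨dψ, χ⟩`; so `⟨dφ, ν⟩ = 0`.
-/

open scoped RealInnerProductSpace Topology

section RotatedFrame

variable {E F : Type*} [NormedAddCommGroup E] [NormedSpace ℝ E]
  [NormedAddCommGroup F] [InnerProductSpace ℝ F] {x : E}

theorem inner_fderiv_add_inner_fderiv_eq_zero {f g : E → F} {c : ℝ}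
    (hf : DifferentiableAt ℝ f x) (hg : DifferentiableAt ℝ g x)
    (hfg : ∀ᶠ y in 𝓝 x, ⟪f y, g y⟫ = c) (v : E) :
    ⟪f x, fderiv ℝ g x v⟫ + ⟪fderiv ℝ f x v, g x⟫ = 0 := by
  have hconst : fderiv ℝ (fun y => ⟪f y, g y⟫) x = 0 := by
    rw [Filter.EventuallyEq.fderiv_eq hfg, fderiv_const_apply]
  simpa only [fderiv_inner_apply ℝ hf hg, zero_apply] using congrArg (· v) hconst

theorem inner_fderiv_self_eq_zero {f : E → F} {c : ℝ} (hf : DifferentiableAt ℝ f x)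
    (hff : ∀ᶠ y in 𝓝 x, ⟪f y, f y⟫ = c) (v : E) : ⟪fderiv ℝ f x v, f x⟫ = 0 := by
  have := inner_fderiv_add_inner_fderiv_eq_zero hf hf hff v
  rw [real_inner_comm _ (f x)] at this
  linarith

theorem inner_fderiv_rotate {ψ χ : E → F} {a : E → ℝ}
    (hψ : DifferentiableAt ℝ ψ x) (hχ : DifferentiableAt ℝ χ x) (ha : DifferentiableAt ℝ a x)
    (hψψ : ∀ᶠ y in 𝓝 x, ⟪ψ y, ψ y⟫ = 1) (hχχ : ∀ᶠ y in 𝓝 x, ⟪χ y, χ y⟫ = 1)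
    (hψχ : ∀ᶠ y in 𝓝 x, ⟪ψ y, χ y⟫ = 0) (v : E) :
    ⟪fderiv ℝ (fun y => Real.cos (a y) • ψ y - Real.sin (a y) • χ y) x v,
      Real.sin (a x) • ψ x + Real.cos (a x) • χ x⟫ = ⟪fderiv ℝ ψ x v, χ x⟫ - fderiv ℝ a x v := by
  have hdψψ := inner_fderiv_self_eq_zero hψ hψψ v
  have hdχχ := inner_fderiv_self_eq_zero hχ hχχ v
  have hdψχ := inner_fderiv_add_inner_fderiv_eq_zero hψ hχ hψχ v
  rw [real_inner_comm _ (ψ x)] at hdψχ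
  have ha' := ha.hasFDerivAt
  rw [((ha'.cos.fun_smul hψ.hasFDerivAt).fun_sub (ha'.sin.fun_smul hχ.hasFDerivAt)).fderiv]
  simp only [sub_apply, add_apply, FunLike.coe_smul, Pi.smul_apply,
    ContinuousLinearMap.smulRight_apply, inner_sub_left, inner_add_left, inner_add_right,
    real_inner_smul_left, real_inner_smul_right, smul_eq_mul]
  rw [real_inner_comm (ψ x) (χ x), hψψ.self_of_nhds, hχχ.self_of_nhds, hψχ.self_of_nhds, hdψψ,
    hdχχ]
  linear_combination (⟪fderiv ℝ ψ x v, χ x⟫ - fderiv ℝ a x v) * Real.sin_sq_add_cos_sq (a x)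
    - Real.sin (a x) ^ 2 * hdψχ

end RotatedFrame

theorem stmt5_general {n : ℕ} (U : Set (EuclideanSpace ℝ (Fin n))) (hU : IsOpen U)
    (w : ℝ → ℝ)
    (x : EuclideanSpace ℝ (Fin n)) (hx : x ∈ U)
    (ψ χ : EuclideanSpace ℝ (Fin n) → EuclideanSpace ℝ (Fin (n + 2)))
    (τ : EuclideanSpace ℝ (Fin n) → ℝ)
    (hψ : DifferentiableAt ℝ ψ x) (hχ : DifferentiableAt ℝ χ x)
    (hτ : DifferentiableAt ℝ τ x)
    (hψψ : ∀ y ∈ U, ⟪ψ y, ψ y⟫ = 1)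
    (hχχ : ∀ y ∈ U, ⟪χ y, χ y⟫ = 1)
    (hψχ : ∀ y ∈ U, ⟪ψ y, χ y⟫ = 0)
    (θ : ℝ → ℝ) (hθ : ∀ t, HasDerivAt θ (1 / w t) t)
    (hdψχ : ∀ v, ⟪fderiv ℝ ψ x v, χ x⟫ = fderiv ℝ τ x v / w (τ x))
    (φ ν : EuclideanSpace ℝ (Fin n) → EuclideanSpace ℝ (Fin (n + 2)))
    (hφ : ∀ y, φ y = Real.cos (θ (τ y)) • ψ y - Real.sin (θ (τ y)) • χ y)
    (hν : ∀ y, ν y = Real.sin (θ (τ y)) • ψ y + Real.cos (θ (τ y)) • χ y) :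
    ∀ v, ⟪fderiv ℝ φ x v, ν x⟫ = 0 := by
  obtain rfl : φ = _ := funext hφ
  obtain rfl : ν = _ := funext hν
  have hUx : U ∈ 𝓝 x := hU.mem_nhds hx
  have hθτ : HasFDerivAt (fun y => θ (τ y)) ((1 / w (τ x)) • fderiv ℝ τ x) x :=
    (hθ (τ x)).comp_hasFDerivAt x hτ.hasFDerivAt
  intro v
  rw [inner_fderiv_rotate hψ hχ hθτ.differentiableAt (Filter.eventually_of_mem hUx hψψ)
    (Filter.eventually_of_mem hUx hχχ) (Filter.eventually_of_mem hUx hψχ), hθτ.fderiv, hdψχ,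
    smul_apply, smul_eq_mul, one_div, div_eq_inv_mul, sub_self]

/-- Conclusion of Section 2 in the spherical case: with the normalization `θ' = 1/w`
and `⟨dψ_x(v), χ(x)⟩ = dτ_x(v)/w(τ(x))`, the map `ν` is the Gauss map of `φ`,
i.e. `⟨dφ_x(v), ν(x)⟩ = 0` for all `v`. -/
theorem stmt5 {n : ℕ} (U : Set (EuclideanSpace ℝ (Fin n))) (hU : IsOpen U)
    (w : ℝ → ℝ) (hw : ∀ t, 0 < w t)
    (x : EuclideanSpace ℝ (Fin n)) (hx : x ∈ U)
    (ψ χ : EuclideanSpace ℝ (Fin n) → EuclideanSpace ℝ (Fin (n + 2)))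
    (τ : EuclideanSpace ℝ (Fin n) → ℝ)
    (hψ : DifferentiableAt ℝ ψ x) (hχ : DifferentiableAt ℝ χ x)
    (hτ : DifferentiableAt ℝ τ x)
    (hψψ : ∀ y ∈ U, ⟪ψ y, ψ y⟫ = 1)
    (hχχ : ∀ y ∈ U, ⟪χ y, χ y⟫ = 1)
    (hψχ : ∀ y ∈ U, ⟪ψ y, χ y⟫ = 0)
    (θ : ℝ → ℝ) (hθ : ∀ t, HasDerivAt θ (1 / w t) t)
    (hdψχ : ∀ v, ⟪fderiv ℝ ψ x v, χ x⟫ = fderiv ℝ τ x v / w (τ x))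
    (φ ν : EuclideanSpace ℝ (Fin n) → EuclideanSpace ℝ (Fin (n + 2)))
    (hφ : ∀ y, φ y = Real.cos (θ (τ y)) • ψ y - Real.sin (θ (τ y)) • χ y)
    (hν : ∀ y, ν y = Real.sin (θ (τ y)) • ψ y + Real.cos (θ (τ y)) • χ y) :
    ∀ v, ⟪fderiv ℝ φ x v, ν x⟫ = 0 :=
  stmt5_general U hU w x hx ψ χ τ hψ hχ hτ hψψ hχχ hψχ θ hθ hdψχ φ ν hφ hν
end

section
/- Let p ≥ 2, let κ_1 < κ_2 < … < κ_p be real numbers, let m_1, …, m_p be positive real numbers, let a and c be real numbers, and define Q(X) := −a·∏_{k=1}^p (X − κ_k) + Σ_{k=1}^p m_k·(X·κ_k + c)·∏_{j ≠ k} (X − κ_j). Fix i with 1 ≤ i ≤ p − 1 and suppose κ_i² + c > 0 and κ_{i+1}² + c > 0. Then Q(κ_i)·Q(κ_{i+1}) < 0. -/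
open Finset

/-- Sign computation in the proof of Corollary 1.5: at two consecutive principal
curvatures, the polynomial `Q` takes values of opposite signs. -/
theorem stmt8 (p : ℕ) (hp : 2 ≤ p) (κ m : Fin p → ℝ) (hκ : StrictMono κ)
    (hm : ∀ k, 0 < m k) (a c : ℝ) (Q : ℝ → ℝ)
    (hQ : ∀ X, Q X = -a * ∏ k, (X - κ k) +
      ∑ k, m k * (X * κ k + c) * ∏ j ∈ univ.erase k, (X - κ j))
    (i : ℕ) (hi : i + 1 < p)
    (h1 : κ ⟨i, by omega⟩ ^ 2 + c > 0) (h2 : κ ⟨i + 1, hi⟩ ^ 2 + c > 0) :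
    Q (κ ⟨i, by omega⟩) * Q (κ ⟨i + 1, hi⟩) < 0 := by
  set ii : Fin p := ⟨i, by omega⟩ with hii
  set jj : Fin p := ⟨i + 1, hi⟩ with hjj
  have hij : ii ≠ jj := by simp [hii, hjj, Fin.ext_iff]
  have hlt : κ ii < κ jj := hκ (by simp [hii, hjj, Fin.lt_def])
  have key : ∀ k : Fin p, Q (κ k) =
      m k * (κ k * κ k + c) * ∏ j ∈ univ.erase k, (κ k - κ j) := by
    intro k
    rw [hQ]
    rw [Finset.prod_eq_zero (mem_univ k) (by ring)]
    rw [Finset.sum_eq_single k]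
    · ring
    · intro b _ hb
      rw [Finset.prod_eq_zero (Finset.mem_erase.mpr ⟨hb.symm, mem_univ k⟩) (by ring)]
      ring
    · simp
  have hmemj : jj ∈ univ.erase ii := Finset.mem_erase.mpr ⟨hij.symm, mem_univ jj⟩
  have hmemi : ii ∈ univ.erase jj := Finset.mem_erase.mpr ⟨hij, mem_univ ii⟩
  have hQi := key ii
  have hQj := key jj
  rw [← Finset.mul_prod_erase _ _ hmemj] at hQi
  rw [← Finset.mul_prod_erase _ _ hmemi] at hQj
  rw [Finset.erase_right_comm] at hQj
  set S := (univ.erase ii).erase jj with hS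
  have hprod : 0 < ∏ j ∈ S, ((κ ii - κ j) * (κ jj - κ j)) := by
    apply Finset.prod_pos
    intro j hj
    have hj1 : j ≠ jj := (Finset.mem_erase.mp hj).1
    have hj2 : j ≠ ii := (Finset.mem_erase.mp (Finset.mem_erase.mp hj).2).1
    have hv1 : (j : ℕ) ≠ i + 1 := fun h => hj1 (Fin.ext h)
    have hv2 : (j : ℕ) ≠ i := fun h => hj2 (Fin.ext h)
    rcases lt_or_gt_of_ne hv2 with h | h
    · have l1 : κ j < κ ii := hκ (by simp [hii, Fin.lt_def, h])
      have l2 : κ j < κ jj := lt_trans l1 hlt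
      exact mul_pos (by linarith) (by linarith)
    · have hgt : (i + 1 : ℕ) < j := by omega
      have l2 : κ jj < κ j := hκ (by simp [hjj, Fin.lt_def, hgt])
      have l1 : κ ii < κ j := lt_trans hlt l2
      exact mul_pos_of_neg_of_neg (by linarith) (by linarith)
  rw [Finset.prod_mul_distrib] at hprod
  have e1 : (0:ℝ) < κ ii * κ ii + c := by nlinarith [h1]
  have e2 : (0:ℝ) < κ jj * κ jj + c := by nlinarith [h2]
  have hpos : 0 < (m ii * (κ ii * κ ii + c)) * (m jj * (κ jj * κ jj + c)) *
      ((∏ j ∈ S, (κ ii - κ j)) * ∏ j ∈ S, (κ jj - κ j)) :=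
    mul_pos (mul_pos (mul_pos (hm ii) e1) (mul_pos (hm jj) e2)) hprod
  have hneg : (κ ii - κ jj) * (κ jj - κ ii) < 0 :=
    mul_neg_of_neg_of_pos (by linarith) (by linarith)
  rw [hQi, hQj]
  nlinarith [mul_pos hpos (neg_pos.mpr hneg)]
end

section
/- Let n ≥ 0 and define Φ : ℝ^{n+1} × ℝ → ℝ^{n+1} × ℝ × ℝ by Φ(y, t) = ( e^t·y, cosh t − (e^t/2)·‖y‖², sinh t + (e^t/2)·‖y‖² ), where ‖·‖ and ⟨·,·⟩ denote the Euclidean norm and inner product on ℝ^{n+1}. Then Φ is differentiable, and if DΦ(y,t)(u, s) = (p, a, b) and DΦ(y,t)(v, r) = (q, a', b') denote the values of its differential at (y, t) on tangent vectors (u, s), (v, r) ∈ ℝ^{n+1} × ℝ, then ⟨p, q⟩ + a·a' − b·b' = e^{2t}·⟨u, v⟩ − s·r. -/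
/-! The differential of `Φ` at `(y, t)` sends `(u, s)` to
`(eᵗ (u + s y), s sinh t - c, s cosh t + c)` with `c = eᵗ (⟪y, u⟫ + s ‖y‖² / 2)`.
In the Lorentzian part, `cosh² - sinh² = 1` produces `-s r`, and since `cosh + sinh = eᵗ`
the cross terms are `-eᵗ (s c' + r c)`, which cancel exactly the terms of
`⟪eᵗ (u + s y), eᵗ (v + r y)⟫` that involve `y`. -/

open scoped RealInnerProductSpace

noncomputable section

namespace DeSitter

variable {E : Type*} [NormedAddCommGroup E] [InnerProductSpace ℝ E]

def embedding (p : E × ℝ) : E × ℝ × ℝ :=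
  (Real.exp p.2 • p.1,
    Real.cosh p.2 - Real.exp p.2 / 2 * ‖p.1‖ ^ 2,
    Real.sinh p.2 + Real.exp p.2 / 2 * ‖p.1‖ ^ 2)

def lorentzForm (p q : E × ℝ × ℝ) : ℝ :=
  ⟪p.1, q.1⟫ + p.2.1 * q.2.1 - p.2.2 * q.2.2

theorem exists_hasFDerivAt_embedding (y : E) (t : ℝ) :
    ∃ D : E × ℝ →L[ℝ] E × ℝ × ℝ, HasFDerivAt embedding D (y, t) ∧
      ∀ (u : E) (s : ℝ), D (u, s) =
        (Real.exp t • (u + s • y),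
          s * Real.sinh t - Real.exp t * (⟪y, u⟫ + s / 2 * ‖y‖ ^ 2),
          s * Real.cosh t + Real.exp t * (⟪y, u⟫ + s / 2 * ‖y‖ ^ 2)) := by
  have hfst := hasFDerivAt_fst (𝕜 := ℝ) (p := (y, t))
  have hsnd := hasFDerivAt_snd (𝕜 := ℝ) (p := (y, t))
  have hweight := (hsnd.exp.mul_const 2⁻¹).mul hfst.norm_sq
  simp only [← div_eq_mul_inv] at hweight
  refine ⟨_, (hsnd.exp.smul hfst).prodMk ((hsnd.cosh.sub hweight).prodMk
    (hsnd.sinh.add hweight)), fun u s => ?_⟩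
  ext <;>
    simp only [ContinuousLinearMap.prod_apply, add_apply, sub_apply, smul_apply,
      ContinuousLinearMap.smulRight_apply, ContinuousLinearMap.comp_apply,
      ContinuousLinearMap.coe_fst', ContinuousLinearMap.coe_snd', coe_innerSL_apply,
      smul_eq_mul, nsmul_eq_mul, Nat.cast_ofNat, smul_add, smul_smul] <;>
    ring

theorem differentiable_embedding : Differentiable ℝ (embedding (E := E)) := fun p =>
  (exists_hasFDerivAt_embedding p.1 p.2).elim fun _ hD => hD.1.differentiableAt

theorem lorentzForm_fderiv_embedding (y : E) (t : ℝ) (u v : E) (s r : ℝ) :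
    lorentzForm (fderiv ℝ embedding (y, t) (u, s)) (fderiv ℝ embedding (y, t) (v, r)) =
      Real.exp (2 * t) * ⟪u, v⟫ - s * r := by
  obtain ⟨D, hD, hDapply⟩ := exists_hasFDerivAt_embedding y t
  have hexp_two_mul : Real.exp (2 * t) = Real.exp t * Real.exp t := by
    rw [two_mul, Real.exp_add]
  rw [hD.fderiv, hDapply, hDapply, lorentzForm]
  simp only [inner_smul_left, inner_smul_right, inner_add_left, inner_add_right,
    real_inner_self_eq_norm_sq, real_inner_comm y u, RCLike.conj_to_real]
  linear_combination (-⟪u, v⟫) * hexp_two_mul - s * r * Real.cosh_sq_sub_sinh_sq t -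
    Real.exp t * (s * ⟪y, v⟫ + r * ⟪y, u⟫ + s * r * ‖y‖ ^ 2) * Real.cosh_add_sinh t

end DeSitter

end

/-- The map `Φ` of Section 3.5 is differentiable and is an isometry from the warped
product `ℝ^{n+1} ×_{e^t} ℝ` onto its image in the ambient space of the hyperboloid
model of de Sitter space. -/
theorem stmt15 (n : ℕ)
    (Φ : EuclideanSpace ℝ (Fin (n + 1)) × ℝ → EuclideanSpace ℝ (Fin (n + 1)) × ℝ × ℝ)
    (hΦ : ∀ (y : EuclideanSpace ℝ (Fin (n + 1))) (t : ℝ),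
      Φ (y, t) = (Real.exp t • y,
        Real.cosh t - Real.exp t / 2 * ‖y‖ ^ 2,
        Real.sinh t + Real.exp t / 2 * ‖y‖ ^ 2)) :
    Differentiable ℝ Φ ∧
      ∀ (y : EuclideanSpace ℝ (Fin (n + 1))) (t : ℝ)
        (u v : EuclideanSpace ℝ (Fin (n + 1))) (s r : ℝ),
        ⟪(fderiv ℝ Φ (y, t) (u, s)).1, (fderiv ℝ Φ (y, t) (v, r)).1⟫ +
            (fderiv ℝ Φ (y, t) (u, s)).2.1 * (fderiv ℝ Φ (y, t) (v, r)).2.1 -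
            (fderiv ℝ Φ (y, t) (u, s)).2.2 * (fderiv ℝ Φ (y, t) (v, r)).2.2 =
          Real.exp (2 * t) * ⟪u, v⟫ - s * r := by
  obtain rfl : Φ = DeSitter.embedding := funext fun p => hΦ p.1 p.2
  exact ⟨DeSitter.differentiable_embedding, DeSitter.lorentzForm_fderiv_embedding⟩
end
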